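/- Let A ∈ ℝ^{N×N} with ρ(A) < 1 and let f, g : M → ℝ^N both satisfy the consistency relation h(φ(x)) = A h(x) + C ω(φ(x)) for all x ∈ M, where φ : M → M is a bijection with bounded orbits under f − g (i.e., sup over all x and iterates of ‖f(x) − g(x)‖ is finite). Then f = g. -/

import Mathlib

open Matrix Filter Topology MeasureTheory ProbabilityTheory

attribute [local instance] Matrix.linftyOpNormedRing Matrix.linftyOpNormedAddCommGroup

/-- The spectral radius of a real square matrix: the maximum modulus of its complex
eigenvalues. -/
noncomputable def specRad {N : ℕ} (A : Matrix (Fin N) (Fin N) ℝ) : ℝ :=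
  sSup ((fun z : ℂ => ‖z‖) '' spectrum ℂ (A.map Complex.ofReal))

/-! If `f` and `g` both satisfy the relation, `h = f - g` satisfies `h ∘ φ = A h`, so
`h x = Aᵏ h (φ⁻ᵏ x)` and `‖h x‖ ≤ ‖Aᵏ‖ K` for every `k`. Since `ρ(A) < 1`, Gelfand's formula
for the complexification of `A` gives `‖Aᵏ‖ → 0`. -/

attribute [local instance] Matrix.linftyOpNormedAlgebra

theorem tendsto_norm_pow_atTop_nhds_zero_of_spectralRadius_lt_one {A : Type*} [NormedRing A]
    [NormedAlgebra ℂ A] [CompleteSpace A] {a : A} (ha : spectralRadius ℂ a < 1) :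
    Tendsto (fun n : ℕ => ‖a ^ n‖) atTop (𝓝 0) := by
  obtain ⟨r, hr_gt, hr_lt⟩ := ENNReal.lt_iff_exists_nnreal_btwn.mp ha
  have hpow : ∀ᶠ n : ℕ in atTop, ‖a ^ n‖ ≤ (r : ℝ) ^ n := by
    have hgelfand := spectrum.pow_norm_pow_one_div_tendsto_nhds_spectralRadius a
    filter_upwards [hgelfand.eventually_lt_const hr_gt, eventually_gt_atTop 0] with n hn hn_pos
    rw [ENNReal.ofReal_lt_coe_iff (by positivity), one_div,
      Real.rpow_inv_lt_iff_of_pos (norm_nonneg _) r.coe_nonneg (by positivity),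
      Real.rpow_natCast] at hn
    exact hn.le
  exact squeeze_zero' (.of_forall fun n => norm_nonneg _) hpow
    (tendsto_pow_atTop_nhds_zero_of_lt_one r.coe_nonneg (by exact_mod_cast hr_lt))

theorem spectralRadius_map_ofReal_le_specRad {N : ℕ} (A : Matrix (Fin N) (Fin N) ℝ) :
    spectralRadius ℂ (A.map Complex.ofReal) ≤ ENNReal.ofReal (specRad A) := by
  have hbdd :=
    ((spectrum.isCompact (A.map Complex.ofReal)).image (continuous_norm (E := ℂ))).bddAbove
  refine iSup₂_le fun z hz => ?_
  rw [← enorm_eq_nnnorm, ← ofReal_norm]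
  exact ENNReal.ofReal_le_ofReal (le_csSup hbdd ⟨z, hz, rfl⟩)

theorem Matrix.linfty_opNorm_map_ofReal {m n : Type*} [Fintype m] [Fintype n]
    (A : Matrix m n ℝ) : ‖A.map Complex.ofReal‖ = ‖A‖ := by
  simp only [Matrix.linfty_opNorm_def, Matrix.map_apply, Complex.nnnorm_real]

theorem tendsto_norm_pow_atTop_nhds_zero_of_specRad_lt_one {N : ℕ}
    {A : Matrix (Fin N) (Fin N) ℝ} (hA : specRad A < 1) :
    Tendsto (fun n : ℕ => ‖A ^ n‖) atTop (𝓝 0) := by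
  have hρ : spectralRadius ℂ (A.map Complex.ofReal) < 1 :=
    (spectralRadius_map_ofReal_le_specRad A).trans_lt (ENNReal.ofReal_lt_one.mpr hA)
  have hmap (n : ℕ) : A.map Complex.ofReal ^ n = (A ^ n).map Complex.ofReal :=
    (A.map_pow Complex.ofRealHom n).symm
  simpa only [hmap, Matrix.linfty_opNorm_map_ofReal] using
    tendsto_norm_pow_atTop_nhds_zero_of_spectralRadius_lt_one hρ

section Conjugacy

variable {M n α : Type*} [Fintype n] [DecidableEq n] [NormedRing α]
  {T : Matrix n n α} {φ : Equiv.Perm M} {h : M → n → α}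

theorem apply_perm_pow_eq_pow_mulVec (hφ : ∀ x, h (φ x) = T *ᵥ h x) (k : ℕ) (x : M) :
    h ((φ ^ k) x) = (T ^ k) *ᵥ h x := by
  induction k with
  | zero => simp
  | succ k ih => rw [pow_succ', Equiv.Perm.mul_apply, hφ, ih, Matrix.mulVec_mulVec, pow_succ']

theorem norm_le_norm_pow_mul_of_apply_perm_eq_mulVec (hφ : ∀ x, h (φ x) = T *ᵥ h x) {K : ℝ}
    (hK : ∀ x, ‖h x‖ ≤ K) (k : ℕ) (x : M) : ‖h x‖ ≤ ‖T ^ k‖ * K :=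
  calc ‖h x‖ = ‖(T ^ k) *ᵥ h ((φ ^ k).symm x)‖ := by
        rw [← apply_perm_pow_eq_pow_mulVec hφ, Equiv.apply_symm_apply]
    _ ≤ ‖T ^ k‖ * ‖h ((φ ^ k).symm x)‖ := Matrix.linfty_opNorm_mulVec _ _
    _ ≤ ‖T ^ k‖ * K := by gcongr; exact hK _

theorem eq_zero_of_bounded_of_apply_perm_eq_mulVec
    (hT : Tendsto (fun k : ℕ => ‖T ^ k‖) atTop (𝓝 0)) (hφ : ∀ x, h (φ x) = T *ᵥ h x)
    {K : ℝ} (hK : ∀ x, ‖h x‖ ≤ K) : h = 0 := by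
  funext x
  have hlim : Tendsto (fun k : ℕ => ‖T ^ k‖ * K) atTop (𝓝 0) := by
    simpa using hT.mul_const K
  exact norm_le_zero_iff.mp
    (ge_of_tendsto' hlim (norm_le_norm_pow_mul_of_apply_perm_eq_mulVec hφ hK · x))

end Conjugacy

theorem stmt_16 {N d : ℕ} {M : Type*} (A : Matrix (Fin N) (Fin N) ℝ)
    (hA : specRad A < 1) (C : Matrix (Fin N) (Fin d) ℝ)
    (φ : M ≃ M) (ω : M → Fin d → ℝ)
    (f g : M → Fin N → ℝ)
    (hfc : ∀ x, f (φ x) = A.mulVec (f x) + C.mulVec (ω (φ x)))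
    (hgc : ∀ x, g (φ x) = A.mulVec (g x) + C.mulVec (ω (φ x)))
    (hbdd : ∃ K : ℝ, ∀ x, ‖f x - g x‖ ≤ K) :
    f = g := by
  obtain ⟨K, hK⟩ := hbdd
  have hdiff : ∀ x, (f - g) (φ x) = A *ᵥ (f - g) x := fun x => by
    simp only [Pi.sub_apply, hfc, hgc, Matrix.mulVec_sub, add_sub_add_right_eq_sub]
  exact sub_eq_zero.mp <| eq_zero_of_bounded_of_apply_perm_eq_mulVec
    (tendsto_norm_pow_atTop_nhds_zero_of_specRad_lt_one hA) hdiff hK
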